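/- There exists a universal constant C > 0 such that the following holds. Let σ > 0, α ∈ (0, 1/2], δ ∈ (0,1), μ ∈ ℝ, let t be a positive integer, and let X_1, …, X_t be i.i.d. real random variables, each σ-sub-Gaussian with mean μ. Let E denote the interval [μ − σ√(2 log(2/α)), μ + σ√(2 log(2/α))]. Then with probability at least 1 − δ, | Σ_{s=1}^t (X_s − μ) · 1{X_s ∈ E} | ≤ C t ( σ α √(log(1/α)) + σ √((2/t) log(2/δ)) ). -/

import Mathlib

open MeasureTheory ProbabilityTheory

/-- A real random variable `X` is `σ`-sub-Gaussian with mean `μ` under `P`: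
it is measurable, integrable with mean `μ`, and its centered moment generating
function satisfies `E[exp (l (X - μ))] ≤ exp (l² σ² / 2)` for all `l ∈ ℝ`. -/
def IsSubGaussianRV {Ω : Type*} [MeasurableSpace Ω] (P : Measure Ω)
    (X : Ω → ℝ) (μ σ : ℝ) : Prop :=
  Measurable X ∧ Integrable X P ∧ (∫ ω, X ω ∂P) = μ ∧
    ∀ l : ℝ, Integrable (fun ω => Real.exp (l * (X ω - μ))) P ∧
      (∫ ω, Real.exp (l * (X ω - μ)) ∂P) ≤ Real.exp (l ^ 2 * σ ^ 2 / 2)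

/-! Write `Z_s = X_s - μ` and `M = σ √(2 log (2/α))`, so that the sum is `∑ Z_s 1{|Z_s| ≤ M}`.
The sub-Gaussian tail bound gives `P(|Z| ≥ M) ≤ 2 exp (-M² / 2σ²) = α`, and comparing `|z|` with
`M exp ((M/σ²)(|z| - M))` off `[-M, M]` shows that truncating moves each mean by at most
`M α = O(σ α √(log (1/α)))`. The centered truncations are independent and sub-Gaussian with a
variance proxy `50 σ²` that does not depend on `α`: for `|λ| ≲ 1/M` they are bounded with variance
`O(σ²)`, and for larger `|λ|` the tail mass `α` and the bias are dominated by `λ² σ²`. Hoeffding's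
inequality for their sum then bounds the fluctuation by `O(σ √(t log (2/δ)))` with probability
`1 - δ`. -/

open Real Set
open scoped NNReal

lemma exp_le_one_add_add_sq {x : ℝ} (hx : |x| ≤ 1) : exp x ≤ 1 + x + x ^ 2 := by
  linarith [(abs_le.mp (abs_exp_sub_one_sub_id_le hx)).2]

lemma exp_abs_le_exp_add_exp_neg (x : ℝ) : exp |x| ≤ exp x + exp (-x) := by
  rcases abs_choice x with h | h <;> rw [h] <;> linarith [exp_pos x, exp_pos (-x)]

lemma sq_le_two_mul_exp_add_exp_neg (x : ℝ) : x ^ 2 ≤ 2 * (exp x + exp (-x)) := by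
  have := pow_div_factorial_le_exp (x := |x|) (abs_nonneg x) 2
  rw [sq_abs, Nat.factorial_two, Nat.cast_two] at this
  linarith [exp_abs_le_exp_add_exp_neg x]

lemma abs_indicator_Icc_le {M : ℝ} (hM : 0 ≤ M) (z : ℝ) :
    |(Icc (-M) M).indicator id z| ≤ M := by
  by_cases hz : z ∈ Icc (-M) M
  · simpa [indicator_of_mem hz, abs_le] using hz
  · simpa [indicator_of_notMem hz] using hM

lemma sq_indicator_Icc_le (M z : ℝ) : ((Icc (-M) M).indicator id z) ^ 2 ≤ z ^ 2 := by
  by_cases hz : z ∈ Icc (-M) M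
  · simp [indicator_of_mem hz]
  · simp [indicator_of_notMem hz, sq_nonneg]

/-- Outside `[-M, M]`, `|z| ≤ M e^{γ(|z| - M)}` as soon as `γ M ≥ 1`, by `1 + x ≤ eˣ`. -/
lemma abs_indicator_Icc_sub_le {M γ : ℝ} (hM : 0 < M) (hγ : 1 ≤ γ * M) (z : ℝ) :
    |(Icc (-M) M).indicator id z - z| ≤ M * exp (-(γ * M)) * (exp (γ * z) + exp (-(γ * z))) := by
  by_cases hz : z ∈ Icc (-M) M
  · rw [indicator_of_mem hz, id, sub_self, abs_zero]
    positivity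
  rw [indicator_of_notMem hz, zero_sub, abs_neg]
  have hzM : M < |z| := by
    rw [mem_Icc, ← abs_le] at hz
    exact not_le.mp hz
  have hγ0 : 0 < γ := pos_of_mul_pos_left (by linarith) hM.le
  calc |z| = M * ((|z| - M) / M + 1) := by field_simp; ring
    _ ≤ M * exp (γ * (|z| - M)) := by
        gcongr
        refine (add_one_le_exp _).trans (exp_le_exp.mpr ?_)
        rw [div_le_iff₀ hM]
        nlinarith
    _ = M * exp (-(γ * M)) * exp |γ * z| := by
        rw [mul_assoc, ← exp_add, abs_mul, abs_of_pos hγ0]; ring_nf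
    _ ≤ M * exp (-(γ * M)) * (exp (γ * z) + exp (-(γ * z))) := by
        gcongr; exact exp_abs_le_exp_add_exp_neg _

lemma exp_mul_indicator_Icc_le (M l z : ℝ) :
    exp (l * (Icc (-M) M).indicator id z) ≤ exp (l * z) + {x | M ≤ |x|}.indicator 1 z := by
  by_cases hz : z ∈ Icc (-M) M
  · rw [indicator_of_mem hz, id]
    exact le_add_of_nonneg_right (indicator_nonneg (fun _ _ => zero_le_one) z)
  · have hzM : M ≤ |z| := by
      rw [mem_Icc, ← abs_le] at hz
      exact (not_le.mp hz).le
    rw [indicator_of_notMem hz, indicator_of_mem (show z ∈ {x | M ≤ |x|} from hzM), mul_zero,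
      exp_zero, Pi.one_apply]
    linarith [exp_pos (l * z)]

lemma one_le_two_mul_log_two_div {α : ℝ} (hα : 0 < α) (hα2 : α ≤ 1 / 2) :
    1 ≤ 2 * log (2 / α) := by
  have h4 : log 4 ≤ log (2 / α) := log_le_log (by norm_num) (by rw [le_div_iff₀ hα]; linarith)
  have : log 4 = 2 * log 2 := by rw [show (4 : ℝ) = 2 ^ 2 by norm_num, log_pow]; norm_num
  linarith [log_two_gt_d9]

lemma mul_log_two_div_le_two {α : ℝ} (hα : 0 < α) : α * log (2 / α) ≤ 2 := by
  have := mul_le_mul_of_nonneg_left (log_le_sub_one_of_pos (div_pos two_pos hα)) hα.le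
  rw [mul_sub, mul_div_cancel₀ _ hα.ne'] at this
  linarith

lemma two_mul_exp_neg_sq_div_eq {α c M : ℝ} (hα : 0 < α) (hc : 0 < c)
    (hM2 : M ^ 2 = 2 * c * log (2 / α)) : 2 * exp (-M ^ 2 / (2 * c)) = α := by
  rw [hM2, show -(2 * c * log (2 / α)) / (2 * c) = -log (2 / α) by field_simp, exp_neg,
    exp_log (by positivity)]
  field_simp

lemma sqrt_two_mul_log_two_div_le {α : ℝ} (hα : 0 < α) (hα2 : α ≤ 1 / 2) :
    √(2 * log (2 / α)) ≤ 2 * √(log (1 / α)) := by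
  have hlog2 : log 2 ≤ log (1 / α) := log_le_log two_pos (by rw [le_div_iff₀ hα]; linarith)
  have hsplit : log (2 / α) = log 2 + log (1 / α) := by
    rw [← log_mul two_ne_zero (by positivity), mul_one_div]
  rw [sqrt_le_iff, mul_pow, sq_sqrt (by linarith [log_two_gt_d9])]
  exact ⟨by positivity, by linarith⟩

lemma sqrt_hundred_mul_le {n σ L : ℝ} (hn : 0 < n) (hσ : 0 ≤ σ) (hL : 0 ≤ L) :
    √(100 * n * σ ^ 2 * L) ≤ 10 * n * (σ * √(2 / n * L)) := by
  refine sqrt_le_iff.mpr ⟨by positivity, ?_⟩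
  simp only [mul_pow, sq_sqrt (show 0 ≤ 2 / n * L by positivity)]
  field_simp
  nlinarith [mul_nonneg (mul_nonneg hn.le (sq_nonneg σ)) hL]

section Truncation

variable {Ω : Type*} [MeasurableSpace Ω] {P : Measure Ω} {Z : Ω → ℝ}

lemma AEMeasurable.indicator_Icc_comp (hZ : AEMeasurable Z P) (M : ℝ) :
    AEMeasurable (fun ω => (Icc (-M) M).indicator id (Z ω)) P :=
  (measurable_id.indicator measurableSet_Icc).comp_aemeasurable hZ

lemma AEMeasurable.integrable_indicator_Icc_comp [IsFiniteMeasure P] (hZ : AEMeasurable Z P)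
    {M : ℝ} (hM : 0 ≤ M) : Integrable (fun ω => (Icc (-M) M).indicator id (Z ω)) P :=
  .of_bound (hZ.indicator_Icc_comp M).aestronglyMeasurable M
    (ae_of_all _ fun ω => abs_indicator_Icc_le hM (Z ω))

end Truncation

section Bounded

variable {Ω : Type*} [MeasurableSpace Ω] {P : Measure Ω} [IsProbabilityMeasure P] {Y : Ω → ℝ}

lemma mgf_sub_integral_le_one_add_mul_variance (hY : AEMeasurable Y P) {K : ℝ}
    (hYK : ∀ ω, |Y ω| ≤ K) {l : ℝ} (hl : |l| * (2 * K) ≤ 1) :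
    mgf (fun ω => Y ω - P[Y]) P l ≤ 1 + l ^ 2 * variance Y P := by
  have hYK' : ∀ᵐ ω ∂P, ‖Y ω‖ ≤ K := ae_of_all _ hYK
  have hint : Integrable Y P := .of_bound hY.aestronglyMeasurable K hYK'
  have hmean : |P[Y]| ≤ K := by simpa using norm_integral_le_of_norm_le_const hYK'
  have hcentered : ∀ ω, |Y ω - P[Y]| ≤ 2 * K := fun ω =>
    (abs_sub _ _).trans (by linarith [hYK ω])
  have hsq : Integrable (fun ω => (Y ω - P[Y]) ^ 2) P :=
    .of_bound ((hY.sub_const _).pow_const 2).aestronglyMeasurable ((2 * K) ^ 2)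
      (ae_of_all _ fun ω => by
        rw [norm_pow, Real.norm_eq_abs]
        exact pow_le_pow_left₀ (abs_nonneg _) (hcentered ω) 2)
  have hcent : Integrable (fun ω => Y ω - P[Y]) P := hint.sub (integrable_const _)
  have hlin : Integrable (fun ω => 1 + l * (Y ω - P[Y])) P :=
    (integrable_const 1).add (hcent.const_mul l)
  calc mgf (fun ω => Y ω - P[Y]) P l
      ≤ ∫ ω, (1 + l * (Y ω - P[Y]) + l ^ 2 * (Y ω - P[Y]) ^ 2) ∂P := by
        refine integral_mono_of_nonneg (ae_of_all _ fun ω => (exp_pos _).le)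
          (hlin.add (hsq.const_mul _)) (ae_of_all _ fun ω => ?_)
        have hx : |l * (Y ω - P[Y])| ≤ 1 := by
          rw [abs_mul]
          exact (mul_le_mul_of_nonneg_left (hcentered ω) (abs_nonneg l)).trans hl
        simpa only [mul_pow] using exp_le_one_add_add_sq hx
    _ = 1 + l ^ 2 * variance Y P := by
        rw [integral_add hlin (hsq.const_mul _), integral_add (integrable_const _)
          (hcent.const_mul l), integral_const_mul,
          integral_const_mul, integral_sub hint (integrable_const _),
          variance_eq_integral hY]
        simp

end Bounded

namespace ProbabilityTheory.HasSubgaussianMGF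

variable {Ω : Type*} [MeasurableSpace Ω] {P : Measure Ω} {Z : Ω → ℝ} {c : ℝ≥0}

lemma measureReal_le_abs_le [IsFiniteMeasure P] (h : HasSubgaussianMGF Z c P) {ε : ℝ}
    (hε : 0 ≤ ε) :
    P.real {ω | ε ≤ |Z ω|} ≤ 2 * exp (-ε ^ 2 / (2 * c)) := by
  have hsub : {ω | ε ≤ |Z ω|} ⊆ {ω | ε ≤ Z ω} ∪ {ω | ε ≤ (-Z) ω} := by
    intro ω hω
    rcases abs_choice (Z ω) with hZ | hZ
    · exact Or.inl (by simpa [hZ] using hω)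
    · exact Or.inr (by simpa [hZ] using hω)
  calc P.real {ω | ε ≤ |Z ω|}
      ≤ P.real {ω | ε ≤ Z ω} + P.real {ω | ε ≤ (-Z) ω} :=
        (measureReal_mono hsub).trans (measureReal_union_le _ _)
    _ ≤ exp (-ε ^ 2 / (2 * c)) + exp (-ε ^ 2 / (2 * c)) :=
        add_le_add (h.measure_ge_le hε) (h.neg.measure_ge_le hε)
    _ = 2 * exp (-ε ^ 2 / (2 * c)) := by ring

/-- Integrating `x² ≤ 2 (eˣ + e⁻ˣ)` at `x = s Z` with `c s² = 2` gives `E[Z²] ≤ 2e c`. -/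
lemma integral_sq_le (h : HasSubgaussianMGF Z c P) (hc : 0 < c) :
    ∫ ω, Z ω ^ 2 ∂P ≤ 6 * c := by
  have hc' : (0 : ℝ) < c := hc
  set s := √(2 / c)
  have hs : s ^ 2 = 2 / c := sq_sqrt (by positivity)
  have hexp : ∀ r : ℝ, r ^ 2 = 2 / c → mgf Z P r ≤ exp 1 := fun r hr =>
    (h.mgf_le r).trans_eq (by rw [hr]; field_simp)
  have hmoment : s ^ 2 * ∫ ω, Z ω ^ 2 ∂P ≤ 2 * (mgf Z P s + mgf Z P (-s)) := by
    rw [← integral_const_mul, mgf, mgf, ← integral_add (h.integrable_exp_mul s)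
      (h.integrable_exp_mul (-s)), ← integral_const_mul]
    refine integral_mono ((h.memLp 2).integrable_sq.const_mul _)
      (((h.integrable_exp_mul s).add (h.integrable_exp_mul (-s))).const_mul 2) fun ω => ?_
    simpa only [mul_pow, neg_mul] using sq_le_two_mul_exp_add_exp_neg (s * Z ω)
  have hbound : 2 / c * ∫ ω, Z ω ^ 2 ∂P ≤ 12 := by
    rw [← hs]
    linarith [hexp s hs, hexp (-s) (by rw [neg_sq, hs]), exp_one_lt_d9]
  rw [div_mul_eq_mul_div, div_le_iff₀ hc'] at hbound
  linarith

lemma abs_integral_indicator_Icc_le [IsFiniteMeasure P] (h : HasSubgaussianMGF Z c P)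
    (hZ : P[Z] = 0) (hc : 0 < c) {M : ℝ} (hM : 0 < M) (hcM : c ≤ M ^ 2) :
    |∫ ω, (Icc (-M) M).indicator id (Z ω) ∂P| ≤ 2 * M * exp (-M ^ 2 / (2 * c)) := by
  have hc' : (0 : ℝ) < c := hc
  set γ := M / c
  have hγ : 1 ≤ γ * M := by rw [div_mul_eq_mul_div, le_div_iff₀ hc']; nlinarith
  have hY := h.aemeasurable.integrable_indicator_Icc_comp hM.le
  have hbound := ((h.integrable_exp_mul γ).add (h.integrable_exp_mul (-γ))).const_mul
    (M * exp (-(γ * M)))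
  calc |∫ ω, (Icc (-M) M).indicator id (Z ω) ∂P|
      = |∫ ω, ((Icc (-M) M).indicator id (Z ω) - Z ω) ∂P| := by
        rw [integral_sub hY h.integrable, hZ, sub_zero]
    _ ≤ ∫ ω, M * exp (-(γ * M)) * (exp (γ * Z ω) + exp (-γ * Z ω)) ∂P := by
        refine (abs_integral_le_integral_abs).trans (integral_mono (hY.sub h.integrable).abs
          hbound fun ω => ?_)
        simpa only [neg_mul] using abs_indicator_Icc_sub_le hM hγ (Z ω)
    _ = M * exp (-(γ * M)) * (mgf Z P γ + mgf Z P (-γ)) := by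
        rw [integral_const_mul, integral_add (h.integrable_exp_mul γ)
          (h.integrable_exp_mul (-γ)), mgf, mgf]
    _ ≤ M * exp (-(γ * M)) * (exp (c * γ ^ 2 / 2) + exp (c * (-γ) ^ 2 / 2)) := by
        gcongr <;> exact h.mgf_le _
    _ = 2 * M * exp (-(γ * M) + c * γ ^ 2 / 2) := by rw [neg_sq, exp_add]; ring
    _ = 2 * M * exp (-M ^ 2 / (2 * c)) := by
        congr 2; simp only [γ]; field_simp; ring

lemma mgf_indicator_Icc_le [IsFiniteMeasure P] (h : HasSubgaussianMGF Z c P) {M : ℝ} (hM : 0 ≤ M)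
    (l : ℝ) :
    mgf (fun ω => (Icc (-M) M).indicator id (Z ω)) P l ≤
      exp (c * l ^ 2 / 2) + 2 * exp (-M ^ 2 / (2 * c)) := by
  have htail : NullMeasurableSet {ω | M ≤ |Z ω|} P :=
    nullMeasurableSet_le aemeasurable_const h.aemeasurable.abs
  have hind : Integrable ({ω | M ≤ |Z ω|}.indicator (1 : Ω → ℝ)) P :=
    (integrable_const 1).indicator₀ htail
  calc mgf (fun ω => (Icc (-M) M).indicator id (Z ω)) P l
      ≤ ∫ ω, (exp (l * Z ω) + {ω | M ≤ |Z ω|}.indicator 1 ω) ∂P := by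
        refine integral_mono_of_nonneg (ae_of_all _ fun ω => (exp_pos _).le)
          ((h.integrable_exp_mul l).add hind) (ae_of_all _ fun ω => ?_)
        simpa [indicator_apply] using exp_mul_indicator_Icc_le M l (Z ω)
    _ = mgf Z P l + P.real {ω | M ≤ |Z ω|} := by
        rw [integral_add (h.integrable_exp_mul l) hind, integral_indicator₀ htail, mgf]
        simp
    _ ≤ exp (c * l ^ 2 / 2) + 2 * exp (-M ^ 2 / (2 * c)) :=
        add_le_add (h.mgf_le l) (h.measureReal_le_abs_le hM)

variable [IsProbabilityMeasure P]

lemma abs_integral_indicator_Icc_le_mul (h : HasSubgaussianMGF Z c P) (hZ : P[Z] = 0)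
    (hc : 0 < c) {α M : ℝ} (hα : 0 < α) (hα2 : α ≤ 1 / 2) (hM : 0 < M)
    (hM2 : M ^ 2 = 2 * c * log (2 / α)) :
    |∫ ω, (Icc (-M) M).indicator id (Z ω) ∂P| ≤ M * α := by
  have hcM : (c : ℝ) ≤ M ^ 2 := by
    rw [hM2]; nlinarith [one_le_two_mul_log_two_div hα hα2]
  have := h.abs_integral_indicator_Icc_le hZ hc hM hcM
  rwa [mul_right_comm, two_mul_exp_neg_sq_div_eq hα (by exact_mod_cast hc) hM2, mul_comm] at this

/-- When `2 |l| M > 1`, the tail mass `α` and the bias `M α` are absorbed into `l² c` through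
`α < 4 l² M² α` and `M² α = 2 c α log (2/α) ≤ 4 c`. -/
theorem indicator_Icc_sub_integral (h : HasSubgaussianMGF Z c P) (hZ : P[Z] = 0) (hc : 0 < c)
    {α M : ℝ} (hα : 0 < α) (hα2 : α ≤ 1 / 2) (hM : 0 < M) (hM2 : M ^ 2 = 2 * c * log (2 / α)) :
    HasSubgaussianMGF (fun ω => (Icc (-M) M).indicator id (Z ω) -
      P[fun ω => (Icc (-M) M).indicator id (Z ω)]) (50 * c) P := by
  have hc' : (0 : ℝ) < c := hc
  set Y := fun ω => (Icc (-M) M).indicator id (Z ω)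
  have hYm : AEMeasurable Y P := h.aemeasurable.indicator_Icc_comp M
  have hYM : ∀ ω, |Y ω| ≤ M := fun ω => abs_indicator_Icc_le hM.le (Z ω)
  have htail : 2 * exp (-M ^ 2 / (2 * c)) = α := two_mul_exp_neg_sq_div_eq hα hc' hM2
  have hbias : |P[Y]| ≤ M * α := h.abs_integral_indicator_Icc_le_mul hZ hc hα hα2 hM hM2
  have hMα : M ^ 2 * α ≤ 4 * c := by
    rw [hM2]; nlinarith [mul_log_two_div_le_two hα]
  refine ⟨fun l => (hasSubgaussianMGF_of_mem_Icc hYm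
    (ae_of_all _ fun ω => abs_le.mp (hYM ω))).integrable_exp_mul l, fun l => ?_⟩
  rw [show ((50 * c : ℝ≥0) : ℝ) * l ^ 2 / 2 = 25 * c * l ^ 2 by push_cast; ring]
  have hcl : 0 ≤ c * l ^ 2 := by positivity
  rcases le_or_gt (|l| * (2 * M)) 1 with hl | hl
  · have hvar : variance Y P ≤ 6 * c := by
      refine (variance_le_expectation_sq hYm.aestronglyMeasurable).trans
        (le_trans (integral_mono ?_ (h.memLp 2).integrable_sq fun ω => ?_)
          (h.integral_sq_le hc))
      · exact (h.memLp 2).integrable_sq.mono' (hYm.pow_const 2).aestronglyMeasurable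
          (ae_of_all _ fun ω => by simpa using sq_indicator_Icc_le M (Z ω))
      · exact sq_indicator_Icc_le M (Z ω)
    calc mgf (fun ω => Y ω - P[Y]) P l
        ≤ 1 + l ^ 2 * variance Y P := mgf_sub_integral_le_one_add_mul_variance hYm hYM hl
      _ ≤ 1 + 6 * c * l ^ 2 := by nlinarith [sq_nonneg l]
      _ ≤ exp (25 * c * l ^ 2) := by linarith [add_one_le_exp (25 * c * l ^ 2)]
  · have hl2 : |l| ≤ 2 * l ^ 2 * M := by nlinarith [sq_abs l, abs_nonneg l]
    have hexp : mgf Y P l ≤ exp (c * l ^ 2 / 2 + α) := by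
      refine (h.mgf_indicator_Icc_le hM.le l).trans ?_
      rw [htail, exp_add]
      nlinarith [mul_le_mul_of_nonneg_left (add_one_le_exp α) (exp_pos (c * l ^ 2 / 2)).le,
        one_le_exp (show 0 ≤ c * l ^ 2 / 2 by positivity)]
    have hdrift : -(l * P[Y]) ≤ 8 * c * l ^ 2 := by
      calc -(l * P[Y]) ≤ |l| * |P[Y]| := by rw [← abs_mul]; exact neg_le_abs _
        _ ≤ (2 * l ^ 2 * M) * (M * α) := by gcongr
        _ ≤ 8 * c * l ^ 2 := by nlinarith [sq_nonneg l]
    have hα16 : α ≤ 16 * c * l ^ 2 :=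
      calc α ≤ α * (|l| * (2 * M)) ^ 2 := le_mul_of_one_le_right hα.le (by nlinarith)
        _ = 4 * l ^ 2 * (M ^ 2 * α) := by rw [mul_pow, sq_abs]; ring
        _ ≤ 16 * c * l ^ 2 := by nlinarith [sq_nonneg l]
    calc mgf (fun ω => Y ω - P[Y]) P l = exp (-(l * P[Y])) * mgf Y P l := by
          simp_rw [sub_eq_neg_add]; rw [mgf_const_add, mul_neg]
      _ ≤ exp (-(l * P[Y])) * exp (c * l ^ 2 / 2 + α) := by gcongr
      _ ≤ exp (25 * c * l ^ 2) := by rw [← exp_add]; gcongr; linarith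

lemma ofReal_one_sub_le_measure_abs_le {S : Ω → ℝ} (h : HasSubgaussianMGF S c P) {δ : ℝ}
    (hδ : 0 < δ) (hδ2 : δ ≤ 2) :
    ENNReal.ofReal (1 - δ) ≤ P {ω | |S ω| ≤ √(2 * c * log (2 / δ))} := by
  set ε := √(2 * c * log (2 / δ))
  rcases eq_zero_or_pos c with rfl | hc
  · have hS : ∀ᵐ ω ∂P, |S ω| ≤ ε := by
      filter_upwards [h.ae_eq_zero_of_hasSubgaussianMGF_zero] with ω hω
      simp [hω, ε]
    have hcompl : P {ω | |S ω| ≤ ε}ᶜ = 0 := ae_iff.mp hS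
    rw [measure_congr (ae_eq_univ.mpr hcompl), measure_univ]
    exact ENNReal.ofReal_le_one.mpr (by linarith)
  have hε : ε ^ 2 = 2 * c * log (2 / δ) :=
    sq_sqrt (mul_nonneg (by positivity) (log_nonneg (by rw [le_div_iff₀ hδ]; linarith)))
  have hbad : P {ω | ε ≤ |S ω|} ≤ ENNReal.ofReal δ := by
    rw [← ofReal_measureReal]
    refine ENNReal.ofReal_le_ofReal ((h.measureReal_le_abs_le (sqrt_nonneg _)).trans_eq ?_)
    exact two_mul_exp_neg_sq_div_eq hδ (by exact_mod_cast hc) hε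
  have hcover : 1 ≤ P {ω | |S ω| ≤ ε} + P {ω | ε ≤ |S ω|} := by
    rw [← measure_univ (μ := P)]
    exact (measure_mono fun ω _ => le_total (|S ω|) ε).trans (measure_union_le _ _)
  calc ENNReal.ofReal (1 - δ) = 1 - ENNReal.ofReal δ := by
        rw [ENNReal.ofReal_sub _ hδ.le, ENNReal.ofReal_one]
    _ ≤ P {ω | |S ω| ≤ ε} := tsub_le_iff_right.mpr (hcover.trans (add_le_add_right hbad _))

end ProbabilityTheory.HasSubgaussianMGF

theorem measure_abs_sum_indicator_Icc_le {Ω ι : Type*} [MeasurableSpace Ω] {P : Measure Ω}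
    [IsProbabilityMeasure P] [Fintype ι] {Z : ι → Ω → ℝ} {c : ℝ≥0}
    (hZ : ∀ i, HasSubgaussianMGF (Z i) c P) (hZ0 : ∀ i, P[Z i] = 0) (hindep : iIndepFun Z P)
    (hc : 0 < c) {α M δ : ℝ} (hα : 0 < α) (hα2 : α ≤ 1 / 2) (hM : 0 < M)
    (hM2 : M ^ 2 = 2 * c * log (2 / α)) (hδ : 0 < δ) (hδ2 : δ ≤ 2) :
    ENNReal.ofReal (1 - δ) ≤ P {ω | |∑ i, (Icc (-M) M).indicator id (Z i ω)| ≤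
      Fintype.card ι * (M * α) + √(100 * Fintype.card ι * c * log (2 / δ))} := by
  set b : ι → ℝ := fun i => P[fun ω => (Icc (-M) M).indicator id (Z i ω)]
  have hb : ∀ i, |b i| ≤ M * α := fun i =>
    (hZ i).abs_integral_indicator_Icc_le_mul (hZ0 i) hc hα hα2 hM hM2
  have hcentered := HasSubgaussianMGF.sum_of_iIndepFun (s := Finset.univ)
    (hindep.comp (fun i x => (Icc (-M) M).indicator id x - b i)
      fun i => (measurable_id.indicator measurableSet_Icc).sub_const _)
    fun i _ => (hZ i).indicator_Icc_sub_integral (hZ0 i) hc hα hα2 hM hM2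
  have hvar : 2 * ((∑ _i : ι, 50 * c : ℝ≥0) : ℝ) = 100 * Fintype.card ι * c := by
    push_cast [Finset.sum_const, Finset.card_univ, nsmul_eq_mul]; ring
  refine (hcentered.ofReal_one_sub_le_measure_abs_le hδ hδ2).trans
    (measure_mono fun ω hω => ?_)
  simp only [mem_ofPred_eq, Function.comp_apply, hvar] at hω ⊢
  have hbias : |∑ i, b i| ≤ Fintype.card ι * (M * α) :=
    calc |∑ i, b i| ≤ ∑ i, |b i| := Finset.abs_sum_le_sum_abs _ _
      _ ≤ ∑ _i : ι, M * α := Finset.sum_le_sum fun i _ => hb i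
      _ = Fintype.card ι * (M * α) := by simp
  calc |∑ i, (Icc (-M) M).indicator id (Z i ω)|
      = |∑ i, ((Icc (-M) M).indicator id (Z i ω) - b i) + ∑ i, b i| := by
        rw [← Finset.sum_add_distrib]; simp only [sub_add_cancel]
    _ ≤ Fintype.card ι * (M * α) + √(100 * Fintype.card ι * c * log (2 / δ)) := by
        linarith [abs_add_le (∑ i, ((Icc (-M) M).indicator id (Z i ω) - b i)) (∑ i, b i)]

namespace IsSubGaussianRV

variable {Ω : Type*} [MeasurableSpace Ω] {P : Measure Ω} {X : Ω → ℝ} {μ σ : ℝ}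

lemma hasSubgaussianMGF (h : IsSubGaussianRV P X μ σ) :
    HasSubgaussianMGF (fun ω => X ω - μ) (σ ^ 2).toNNReal P where
  integrable_exp_mul l := (h.2.2.2 l).1
  mgf_le l := (h.2.2.2 l).2.trans_eq (by rw [Real.coe_toNNReal _ (sq_nonneg σ)]; ring_nf)

lemma integral_sub_eq_zero [IsProbabilityMeasure P] (h : IsSubGaussianRV P X μ σ) :
    P[fun ω => X ω - μ] = 0 := by
  rw [integral_sub h.2.1 (integrable_const μ), h.2.2.1, integral_const]
  simp

end IsSubGaussianRV

/-- **Concentration of the truncated sum.** There is a universal constant `C > 0` such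
that for i.i.d. `σ`-sub-Gaussian samples `X_1, …, X_t` with mean `μ` and the truncation
interval `E = [μ − σ√(2 log (2/α)), μ + σ√(2 log (2/α))]`, with probability at least
`1 − δ`, `|∑_{s=1}^t (X_s − μ) 1{X_s ∈ E}| ≤ C t (σ α √(log (1/α)) + σ √((2/t) log (2/δ)))`. -/
theorem truncated_sum_concentration :
    ∃ C : ℝ, 0 < C ∧
      ∀ (Ω : Type) (_ : MeasurableSpace Ω) (P : Measure Ω), IsProbabilityMeasure P →
      ∀ (σ α δ μ : ℝ) (t : ℕ),
        0 < σ → 0 < α → α ≤ 1 / 2 → 0 < δ → δ < 1 → 0 < t →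
      ∀ X : Fin t → Ω → ℝ,
        (∀ s : Fin t, IsSubGaussianRV P (X s) μ σ) →
        iIndepFun X P →
        (∀ s s' : Fin t, IdentDistrib (X s) (X s') P P) →
        ENNReal.ofReal (1 - δ) ≤
          P {ω | |∑ s : Fin t,
                    (if X s ω ∈ Set.Icc (μ - σ * Real.sqrt (2 * Real.log (2 / α)))
                                        (μ + σ * Real.sqrt (2 * Real.log (2 / α)))
                     then X s ω - μ else 0)|
                ≤ C * (t : ℝ) * (σ * α * Real.sqrt (Real.log (1 / α))
                    + σ * Real.sqrt ((2 / (t : ℝ)) * Real.log (2 / δ)))} := by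
  refine ⟨10, by norm_num, fun Ω _ P _ σ α δ μ t hσ hα hα2 hδ hδ1 ht X hX hindep _ => ?_⟩
  set M := σ * √(2 * log (2 / α))
  have hlog := one_le_two_mul_log_two_div hα hα2
  have hM : 0 < M := mul_pos hσ (sqrt_pos.mpr (by linarith))
  have hM2 : M ^ 2 = 2 * (σ ^ 2).toNNReal * log (2 / α) := by
    rw [mul_pow, sq_sqrt (by linarith), Real.coe_toNNReal _ (sq_nonneg σ)]; ring
  have hconc := measure_abs_sum_indicator_Icc_le (fun s => (hX s).hasSubgaussianMGF)
    (fun s => (hX s).integral_sub_eq_zero) (hindep.comp _ fun _ => measurable_id.sub_const μ)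
    (Real.toNNReal_pos.mpr (by positivity)) hα hα2 hM hM2 hδ (by linarith)
  refine hconc.trans (measure_mono fun ω hω => ?_)
  simp only [mem_ofPred_eq, Fintype.card_fin, Real.coe_toNNReal _ (sq_nonneg σ)] at hω ⊢
  have hind : ∀ s, (if X s ω ∈ Icc (μ - M) (μ + M) then X s ω - μ else 0) =
      (Icc (-M) M).indicator id (X s ω - μ) := fun s => by
    simp only [indicator_apply, id, sub_mem_Icc_iff_left, neg_add_eq_sub, add_comm M μ]
  have ht' : (0 : ℝ) < t := Nat.cast_pos.mpr ht
  have hbias : M * α ≤ 2 * (σ * α * √(log (1 / α))) := by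
    nlinarith [mul_le_mul_of_nonneg_left (sqrt_two_mul_log_two_div_le hα hα2) hσ.le]
  have hdev := sqrt_hundred_mul_le ht' hσ.le
    (log_nonneg (show 1 ≤ 2 / δ by rw [le_div_iff₀ hδ]; linarith))
  simp_rw [hind]
  nlinarith [mul_le_mul_of_nonneg_left hbias ht'.le,
    mul_nonneg ht'.le (show 0 ≤ σ * α * √(log (1 / α)) by positivity)]
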